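/- Let G be a finite simple graph with distinct terminals s_1,…,s_k,t_1,…,t_k. Let G_1 and G_2 be subgraphs of G with G = G_1 ∪ G_2 and V(G_1) ∩ V(G_2) = U, where |U| = k, U contains no terminal, each s_i ∈ V(G_1) ∖ U, and each t_i ∈ V(G_2) ∖ U. Let 𝒫 = (P_1,…,P_k) and 𝒬 = (Q_1,…,Q_k) be linkages such that for every i the paths P_i and Q_i meet U in the same single vertex u_i. Then each P_i is the concatenation of a path P_i^1 from s_i to u_i lying in G_1 and a path P_i^2 from u_i to t_i lying in G_2 (and similarly each Q_i decomposes as Q_i^1 and Q_i^2), and 𝒫 is reconfigurable to 𝒬 in G if and only if (P_1^1,…,P_k^1) is reconfigurable to (Q_1^1,…,Q_k^1) in G_1 with respect to the terminals (s_1,u_1),…,(s_k,u_k) and (P_1^2,…,P_k^2) is reconfigurable to (Q_1^2,…,Q_k^2) in G_2 with respect to the terminals (u_1,t_1),…,(u_k,t_k). -/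

import Mathlib

open Set

/-- A plane embedding of a finite simple graph. -/
structure PlaneEmbedding {V : Type} [Fintype V] [DecidableEq V] (G : SimpleGraph V) where
  vert : V → ℝ × ℝ
  vert_inj : Function.Injective vert
  arc : ∀ {u v : V}, G.Adj u v → Path (vert u) (vert v)
  arc_inj : ∀ {u v : V} (h : G.Adj u v), Function.Injective (arc h)
  arc_symm : ∀ {u v : V} (h : G.Adj u v), arc h.symm = (arc h).symm
  arc_arc : ∀ {u v x y : V} (h : G.Adj u v) (h' : G.Adj x y),
    s(u, v) ≠ s(x, y) →
    Set.range (arc h) ∩ Set.range (arc h') ⊆ vert '' (({u, v} : Set V) ∩ {x, y})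
  arc_vert : ∀ {u v : V} (h : G.Adj u v),
    Set.range (arc h) ∩ Set.range vert ⊆ {vert u, vert v}

namespace PlaneEmbedding

variable {V : Type} [Fintype V] [DecidableEq V] {G : SimpleGraph V}

/-- The image of a plane embedding: all vertex points and all arc points. -/
def image (emb : PlaneEmbedding G) : Set (ℝ × ℝ) :=
  Set.range emb.vert ∪ ⋃ (u : V) (v : V) (h : G.Adj u v), Set.range (emb.arc h)

/-- A face of a plane embedding is a connected component of the complement of the image. -/
def IsFace (emb : PlaneEmbedding G) (F : Set (ℝ × ℝ)) : Prop :=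
  ∃ x ∈ (emb.image)ᶜ, F = connectedComponentIn (emb.image)ᶜ x

/-- The curve of a walk: the concatenation of the arcs of its edges. -/
noncomputable def walkCurve (emb : PlaneEmbedding G) :
    ∀ {u v : V}, G.Walk u v → Path (emb.vert u) (emb.vert v)
  | _, _, SimpleGraph.Walk.nil => Path.refl _
  | _, _, SimpleGraph.Walk.cons h w => (emb.arc h).trans (emb.walkCurve w)

end PlaneEmbedding

/-- A linkage: a tuple of pairwise vertex-disjoint paths, `path i` from `s i` to `t i`. -/
structure Linkage {V : Type} [Fintype V] [DecidableEq V] (G : SimpleGraph V) (k : ℕ)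
    (s t : Fin k → V) where
  path : ∀ i : Fin k, G.Walk (s i) (t i)
  isPath : ∀ i, (path i).IsPath
  disjoint : ∀ i j, i ≠ j → ∀ x : V, x ∈ (path i).support → x ∉ (path j).support

namespace Linkage

variable {V : Type} [Fintype V] [DecidableEq V] {G : SimpleGraph V} {k : ℕ} {s t : Fin k → V}

/-- Two linkages are adjacent if they differ in exactly one path. -/
def Adjacent (P Q : Linkage G k s t) : Prop :=
  ∃ i : Fin k, P.path i ≠ Q.path i ∧ ∀ j : Fin k, j ≠ i → P.path j = Q.path j

/-- A linkage is reconfigurable to another if there is a finite sequence of linkages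
from one to the other in which consecutive members are adjacent. -/
def Reconfigurable (P Q : Linkage G k s t) : Prop :=
  Relation.ReflTransGen Adjacent P Q

end Linkage

/-- An s-t linkage of size k: a set of k pairwise internally vertex-disjoint s-t paths. -/
structure STLinkage {V : Type} [Fintype V] [DecidableEq V] (G : SimpleGraph V) (s t : V)
    (k : ℕ) where
  paths : Finset (G.Path s t)
  card_eq : paths.card = k
  disjoint : ∀ P ∈ paths, ∀ Q ∈ paths, P ≠ Q →
    ∀ x : V, x ∈ (P : G.Walk s t).support → x ∈ (Q : G.Walk s t).support → x = s ∨ x = t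

namespace STLinkage

variable {V : Type} [Fintype V] [DecidableEq V] {G : SimpleGraph V} {s t : V} {k : ℕ}

/-- Two s-t linkages are adjacent if one is obtained from the other by removing one path
and adding one path. -/
def Adjacent (P Q : STLinkage G s t k) : Prop :=
  ∃ (p q : G.Path s t), p ∈ P.paths ∧ q ∉ P.paths ∧ Q.paths = insert q (P.paths.erase p)

/-- An s-t linkage is reconfigurable to another if there is a finite sequence of s-t linkages
from one to the other in which consecutive members are adjacent. -/
def Reconfigurable (P Q : STLinkage G s t k) : Prop :=
  Relation.ReflTransGen Adjacent P Q

end STLinkage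

/-- An s-t separator: a set of vertices avoiding s and t that meets every s-t path. -/
def IsSTSeparator {V : Type} [Fintype V] [DecidableEq V] (G : SimpleGraph V) (s t : V)
    (U : Finset V) : Prop :=
  s ∉ U ∧ t ∉ U ∧ ∀ W : G.Walk s t, ∃ x ∈ U, x ∈ W.support

/-- A terminal separator: a set of vertices containing no terminals that meets every path
from a source terminal to a sink terminal. -/
def IsTerminalSeparator {V : Type} [Fintype V] [DecidableEq V] (G : SimpleGraph V) {k : ℕ}
    (s t : Fin k → V) (U : Finset V) : Prop :=
  (∀ i, s i ∉ U) ∧ (∀ i, t i ∉ U) ∧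
  ∀ (i j : Fin k) (W : G.Walk (s i) (t j)), ∃ x ∈ U, x ∈ W.support

/-- Two paths with the same endpoints are homotopic within a set `A` if there is a homotopy
between them, relative to the endpoints, whose image is contained in `A`. -/
def HomotopicIn {X : Type} [TopologicalSpace X] (A : Set X) {x y : X}
    (γ₀ γ₁ : Path x y) : Prop :=
  ∃ H : C(unitInterval × unitInterval, X),
    (∀ a b : unitInterval, H (a, b) ∈ A) ∧
    (∀ b : unitInterval, H (0, b) = γ₀ b) ∧
    (∀ b : unitInterval, H (1, b) = γ₁ b) ∧
    (∀ a : unitInterval, H (a, 0) = x) ∧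
    (∀ a : unitInterval, H (a, 1) = y)

/-!
Every path from `s i` to `t i` crosses `V(G₁) ∩ V(G₂) = {u₁, …, u_k}`. If the paths other than
the `i`-th keep their vertices `u j`, a new `i`-th path can cross only at `u i`, so every linkage
reachable from `P` meets the separator exactly as `P` does. Such a linkage is cut at the `u i`
into a linkage of `G₁` and one of `G₂`, uniquely since its members are paths, and changing one
path of the whole changes at most the `i`-th path of each half. Conversely any two halves glue
back to a linkage of `G`: they can meet only in `V(G₁) ∩ V(G₂)`, that is, at the junctions.
-/

namespace SimpleGraph

variable {V : Type*} {G : SimpleGraph V}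

namespace Walk

theorem IsPath.append {a b c : V} {p : G.Walk a c} {q : G.Walk c b} (hp : p.IsPath)
    (hq : q.IsPath) (hpq : ∀ x ∈ p.support, x ∈ q.support → x = c) : (p.append q).IsPath := by
  rw [isPath_def, support_append, List.nodup_append]
  refine ⟨hp.support_nodup, hq.support_nodup.sublist (List.tail_sublist _), ?_⟩
  rintro x hx y hy rfl
  have hc := hq.support_nodup
  rw [← cons_tail_support] at hc
  exact (List.nodup_cons.1 hc).1 (hpq x hx (List.mem_of_mem_tail hy) ▸ hy)

variable [DecidableEq V]

theorem IsPath.takeUntil_end {a b : V} {p : G.Walk a b} (hp : p.IsPath) :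
    p.takeUntil b p.end_mem_support = p := by
  conv_rhs => rw [← p.take_spec p.end_mem_support]
  rw [(isPath_iff_nil.1 (hp.dropUntil _)).eq_nil, append_nil]

theorem IsPath.takeUntil_append {a b c : V} {p : G.Walk a c} {q : G.Walk c b}
    (hpq : (p.append q).IsPath) (hc : c ∈ (p.append q).support) :
    (p.append q).takeUntil c hc = p := by
  rw [takeUntil_append_of_mem_left _ _ p.end_mem_support, hpq.of_append_left.takeUntil_end]

theorem IsPath.left_eq_of_append_eq_append {a b c : V} {p p' : G.Walk a c}
    {q q' : G.Walk c b} (hp : (p.append q).IsPath) (h : p.append q = p'.append q') : p = p' := by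
  have hp' : (p'.append q').IsPath := h ▸ hp
  have hc : c ∈ (p.append q).support := p.support_subset_support_append_left q p.end_mem_support
  calc p = (p.append q).takeUntil c hc := (hp.takeUntil_append hc).symm
    _ = (p'.append q').takeUntil c (h ▸ hc) := by simp only [h]
    _ = p' := hp'.takeUntil_append _

theorem IsPath.eq_of_append_eq_append {a b c : V} {p p' : G.Walk a c}
    {q q' : G.Walk c b} (hp : (p.append q).IsPath) (h : p.append q = p'.append q') :
    p = p' ∧ q = q' := by
  refine ⟨hp.left_eq_of_append_eq_append h, reverse_injective ?_⟩
  refine IsPath.left_eq_of_append_eq_append (q := p.reverse) (q' := p'.reverse) ?_ ?_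
  · rwa [← reverse_append, isPath_reverse_iff]
  · rw [← reverse_append, ← reverse_append, h]

end Walk

namespace Subgraph

variable {G₁ G₂ : G.Subgraph}

theorem adj_of_sup_eq_top (hunion : G₁ ⊔ G₂ = ⊤) {x y : V} (hxy : G.Adj x y)
    (hx : x ∉ G₂.verts) : G₁.Adj x y := by
  have h : (G₁ ⊔ G₂).Adj x y := hunion ▸ hxy
  exact h.resolve_right fun h₂ => hx (G₂.edge_vert h₂)

theorem mem_verts_of_mem_support_spanningCoe {H : G.Subgraph} {a b x : V}
    (W : H.spanningCoe.Walk a b) (ha : a ∈ H.verts) (hx : x ∈ W.support) : x ∈ H.verts := by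
  induction W with
  | nil => rwa [Walk.mem_support_nil_iff.1 hx]
  | cons h W ih =>
    rcases List.mem_cons.1 hx with rfl | hx
    · exact ha
    · exact ih (H.edge_vert h.symm) hx

theorem exists_mem_support_inter_verts (hunion : G₁ ⊔ G₂ = ⊤) {a b : V} (W : G.Walk a b)
    (ha : a ∈ G₁.verts) (hb : b ∉ G₁.verts) : ∃ x ∈ W.support, x ∈ G₁.verts ∩ G₂.verts := by
  induction W with
  | nil => exact absurd ha hb
  | @cons x _ _ h W ih =>
    by_cases ha₂ : x ∈ G₂.verts
    · exact ⟨x, W.support.mem_cons_self, ha, ha₂⟩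
    · obtain ⟨x, hx, hx₁₂⟩ := ih (G₁.edge_vert (adj_of_sup_eq_top hunion h ha₂).symm) hb
      exact ⟨x, List.mem_cons_of_mem _ hx, hx₁₂⟩

theorem exists_mapLe_spanningCoe_eq (hunion : G₁ ⊔ G₂ = ⊤) {a b : V} (W : G.Walk a b)
    (hW : W.IsPath) (ha : a ∈ G₁.verts)
    (hinter : ∀ x ∈ W.support, x ∈ G₁.verts ∩ G₂.verts → x = b) :
    ∃ W₁ : G₁.spanningCoe.Walk a b, W₁.mapLe G₁.spanningCoe_le = W := by
  induction W with
  | nil => exact ⟨.nil, rfl⟩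
  | @cons x _ _ h W ih =>
    rw [Walk.cons_isPath_iff] at hW
    have ha₂ : x ∉ G₂.verts := fun ha₂ =>
      hW.2 (hinter x W.support.mem_cons_self ⟨ha, ha₂⟩ ▸ W.end_mem_support)
    have h₁ := adj_of_sup_eq_top hunion h ha₂
    obtain ⟨W₁, rfl⟩ := ih hW.1 (G₁.edge_vert h₁.symm)
      fun x hx => hinter x (List.mem_cons_of_mem _ hx)
    exact ⟨.cons h₁ W₁, rfl⟩

theorem exists_append_eq_of_sup_eq_top [DecidableEq V] (hunion : G₁ ⊔ G₂ = ⊤) {a b c : V}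
    (W : G.Walk a b) (hW : W.IsPath) (ha : a ∈ G₁.verts) (hb : b ∈ G₂.verts)
    (hc : c ∈ W.support) (hinter : ∀ x ∈ W.support, x ∈ G₁.verts ∩ G₂.verts → x = c) :
    ∃ (W₁ : G₁.spanningCoe.Walk a c) (W₂ : G₂.spanningCoe.Walk c b),
      W = (W₁.mapLe G₁.spanningCoe_le).append (W₂.mapLe G₂.spanningCoe_le) := by
  obtain ⟨W₁, hW₁⟩ := exists_mapLe_spanningCoe_eq hunion _ (hW.takeUntil hc) ha
    fun x hx => hinter x (W.support_takeUntil_subset_support hc hx)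
  obtain ⟨W₂, hW₂⟩ := exists_mapLe_spanningCoe_eq (sup_comm G₁ G₂ ▸ hunion) _
    (hW.dropUntil hc).reverse hb fun x hx hx₂₁ => hinter x
      (W.support_dropUntil_subset_support hc (by simpa using hx)) hx₂₁.symm
  refine ⟨W₁, W₂.reverse, ?_⟩
  rw [← Walk.reverse_mapLe, hW₂, Walk.reverse_reverse, hW₁, Walk.take_spec]

end Subgraph

end SimpleGraph

namespace Linkage

open SimpleGraph

variable {V : Type} [Fintype V] [DecidableEq V] {G : SimpleGraph V} {k : ℕ} {s t : Fin k → V}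

theorem ext {P Q : Linkage G k s t} (h : ∀ i, P.path i = Q.path i) : P = Q := by
  cases P; cases Q
  congr
  exact funext h

theorem eq_of_mem_support (P : Linkage G k s t) {i j : Fin k} {x : V}
    (hi : x ∈ (P.path i).support) (hj : x ∈ (P.path j).support) : i = j := by
  by_contra hij
  exact P.disjoint i j hij x hi hj

theorem reflGen_adjacent_of_forall_ne {P Q : Linkage G k s t} (i : Fin k)
    (h : ∀ j, j ≠ i → P.path j = Q.path j) : Relation.ReflGen Adjacent P Q := by
  by_cases hi : P.path i = Q.path i
  · rw [ext fun j => if hj : j = i then hj ▸ hi else h j hj]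
  · exact .single ⟨i, hi, h⟩

theorem Reconfigurable.map {G' : SimpleGraph V} {s' t' : Fin k → V}
    (f : Linkage G k s t → Linkage G' k s' t')
    (hf : ∀ P Q, P.Adjacent Q → ∃ i, ∀ j, j ≠ i → (f P).path j = (f Q).path j)
    {P Q : Linkage G k s t} (h : P.Reconfigurable Q) : (f P).Reconfigurable (f Q) := by
  rw [Reconfigurable, ← Relation.reflTransGen_reflGen]
  refine Relation.ReflTransGen.lift f (fun P Q hPQ => ?_) _ _ h
  obtain ⟨i, hi⟩ := hf P Q hPQ
  exact reflGen_adjacent_of_forall_ne i hi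

section Append

variable {H₁ H₂ : SimpleGraph V} {u : Fin k → V}

def Composable (A : Linkage H₁ k s u) (B : Linkage H₂ k u t) : Prop :=
  ∀ i j x, x ∈ (A.path i).support → x ∈ (B.path j).support → i = j ∧ x = u i

def append (A : Linkage H₁ k s u) (B : Linkage H₂ k u t) (h₁ : H₁ ≤ G) (h₂ : H₂ ≤ G)
    (hAB : A.Composable B) : Linkage G k s t where
  path i := ((A.path i).mapLe h₁).append ((B.path i).mapLe h₂)
  isPath i := ((A.isPath i).mapLe h₁).append ((B.isPath i).mapLe h₂) fun x hA hB => by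
    simp only [Walk.support_mapLe_eq_support] at hA hB
    exact (hAB i i x hA hB).2
  disjoint i j hij x hi hj := by
    simp only [Walk.mem_support_append_iff, Walk.support_mapLe_eq_support] at hi hj
    rcases hi with hi | hi <;> rcases hj with hj | hj
    · exact A.disjoint i j hij x hi hj
    · exact hij (hAB i j x hi hj).1
    · exact hij (hAB j i x hj hi).1.symm
    · exact B.disjoint i j hij x hi hj

@[simp]
theorem append_path (A : Linkage H₁ k s u) (B : Linkage H₂ k u t) (h₁ : H₁ ≤ G) (h₂ : H₂ ≤ G)
    (hAB : A.Composable B) (i : Fin k) :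
    (A.append B h₁ h₂ hAB).path i = ((A.path i).mapLe h₁).append ((B.path i).mapLe h₂) :=
  rfl

theorem exists_split_of_forall_exists (h₁ : H₁ ≤ G) (h₂ : H₂ ≤ G) (R : Linkage G k s t)
    (hR : ∀ i, ∃ (W₁ : H₁.Walk (s i) (u i)) (W₂ : H₂.Walk (u i) (t i)),
      R.path i = (W₁.mapLe h₁).append (W₂.mapLe h₂)) :
    ∃ (A : Linkage H₁ k s u) (B : Linkage H₂ k u t),
      ∀ i, R.path i = ((A.path i).mapLe h₁).append ((B.path i).mapLe h₂) := by
  choose W₁ W₂ hW using hR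
  have hsub₁ : ∀ i, (W₁ i).support ⊆ (R.path i).support := fun i x hx => by
    rw [hW i]
    exact Walk.support_subset_support_append_left _ _ (by simpa using hx)
  have hsub₂ : ∀ i, (W₂ i).support ⊆ (R.path i).support := fun i x hx => by
    rw [hW i]
    exact Walk.support_subset_support_append_right _ _ (by simpa using hx)
  refine ⟨⟨W₁, fun i => ?_, fun i j hij x hi hj => ?_⟩,
    ⟨W₂, fun i => ?_, fun i j hij x hi hj => ?_⟩, hW⟩
  · exact (hW i ▸ R.isPath i).of_append_left.of_mapLe
  · exact R.disjoint i j hij x (hsub₁ i hi) (hsub₁ j hj)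
  · exact (hW i ▸ R.isPath i).of_append_right.of_mapLe
  · exact R.disjoint i j hij x (hsub₂ i hi) (hsub₂ j hj)

theorem Adjacent.reflGen_of_path_eq_append {h₁ : H₁ ≤ G} {h₂ : H₂ ≤ G}
    {R R' : Linkage G k s t} {A A' : Linkage H₁ k s u} {B B' : Linkage H₂ k u t}
    (hR : ∀ i, R.path i = ((A.path i).mapLe h₁).append ((B.path i).mapLe h₂))
    (hR' : ∀ i, R'.path i = ((A'.path i).mapLe h₁).append ((B'.path i).mapLe h₂))
    (h : R.Adjacent R') : Relation.ReflGen Adjacent A A' ∧ Relation.ReflGen Adjacent B B' := by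
  obtain ⟨i, -, hsame⟩ := h
  have hparts : ∀ j, j ≠ i → A.path j = A'.path j ∧ B.path j = B'.path j := fun j hj => by
    have hpath := hR j ▸ R.isPath j
    obtain ⟨hA, hB⟩ := hpath.eq_of_append_eq_append ((hR j).symm.trans ((hsame j hj).trans (hR' j)))
    exact ⟨Walk.map_injective_of_injective (f := Hom.ofLE h₁) (fun _ _ h => h) _ _ hA,
      Walk.map_injective_of_injective (f := Hom.ofLE h₂) (fun _ _ h => h) _ _ hB⟩
  exact ⟨reflGen_adjacent_of_forall_ne i fun j hj => (hparts j hj).1,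
    reflGen_adjacent_of_forall_ne i fun j hj => (hparts j hj).2⟩

end Append

def PassesThrough (R : Linkage G k s t) (u : Fin k → V) : Prop :=
  ∀ i j, u j ∈ (R.path i).support ↔ i = j

section Separator

open Subgraph

variable {u : Fin k → V} {G₁ G₂ : G.Subgraph}

theorem PassesThrough.of_adjacent (hunion : G₁ ⊔ G₂ = ⊤)
    (hsep : G₁.verts ∩ G₂.verts = Set.range u) (hs : ∀ i, s i ∈ G₁.verts)
    (ht : ∀ i, t i ∉ G₁.verts) {R R' : Linkage G k s t} (hR : R.PassesThrough u)
    (h : R.Adjacent R') : R'.PassesThrough u := by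
  obtain ⟨i, -, hsame⟩ := h
  have hpath : ∀ j m, u m ∈ (R'.path j).support → j = m := by
    intro j m hm
    by_cases hj : j = i
    · by_cases hmi : m = i
      · exact hj.trans hmi.symm
      · exact R'.eq_of_mem_support hm (hsame m hmi ▸ (hR m m).2 rfl)
    · exact (hR j m).1 (hsame j hj ▸ hm)
  refine fun j m => ⟨hpath j m, ?_⟩
  rintro rfl
  obtain ⟨x, hx, hxsep⟩ := exists_mem_support_inter_verts hunion (R'.path j) (hs j) (ht j)
  obtain ⟨m, rfl⟩ := hsep.le hxsep
  exact hpath j m hx ▸ hx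

theorem PassesThrough.of_reconfigurable (hunion : G₁ ⊔ G₂ = ⊤)
    (hsep : G₁.verts ∩ G₂.verts = Set.range u) (hs : ∀ i, s i ∈ G₁.verts)
    (ht : ∀ i, t i ∉ G₁.verts) {P Q : Linkage G k s t} (hP : P.PassesThrough u)
    (h : P.Reconfigurable Q) : Q.PassesThrough u := by
  induction h with
  | refl => exact hP
  | tail _ hadj ih => exact ih.of_adjacent hunion hsep hs ht hadj

theorem PassesThrough.exists_split (hunion : G₁ ⊔ G₂ = ⊤)
    (hsep : G₁.verts ∩ G₂.verts = Set.range u) (hs : ∀ i, s i ∈ G₁.verts)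
    (ht : ∀ i, t i ∈ G₂.verts) {R : Linkage G k s t} (hR : R.PassesThrough u) :
    ∃ (A : Linkage G₁.spanningCoe k s u) (B : Linkage G₂.spanningCoe k u t),
      ∀ i, R.path i = ((A.path i).mapLe G₁.spanningCoe_le).append
        ((B.path i).mapLe G₂.spanningCoe_le) :=
  exists_split_of_forall_exists _ _ R fun i =>
    exists_append_eq_of_sup_eq_top hunion (R.path i) (R.isPath i) (hs i) (ht i) ((hR i i).2 rfl)
      fun x hx hxsep => by
        obtain ⟨m, rfl⟩ := hsep.le hxsep
        rw [(hR i m).1 hx]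

theorem composable_of_inter_verts_eq_range (hsep : G₁.verts ∩ G₂.verts = Set.range u)
    (hs : ∀ i, s i ∈ G₁.verts) (A : Linkage G₁.spanningCoe k s u)
    (B : Linkage G₂.spanningCoe k u t) : A.Composable B := by
  intro i j x hA hB
  have hx₁ := mem_verts_of_mem_support_spanningCoe (A.path i) (hs i) hA
  have hx₂ := mem_verts_of_mem_support_spanningCoe (B.path j) (hsep.ge ⟨j, rfl⟩).2 hB
  obtain ⟨m, rfl⟩ := hsep.le ⟨hx₁, hx₂⟩
  have him := A.eq_of_mem_support hA (A.path m).end_mem_support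
  have hmj := B.eq_of_mem_support (B.path m).start_mem_support hB
  exact ⟨him.trans hmj, by rw [him]⟩

theorem Reconfigurable.exists_split (hunion : G₁ ⊔ G₂ = ⊤)
    (hsep : G₁.verts ∩ G₂.verts = Set.range u) (hs : ∀ i, s i ∈ G₁.verts)
    (ht : ∀ i, t i ∈ G₂.verts \ G₁.verts) {P Q : Linkage G k s t} (hPQ : P.Reconfigurable Q)
    (hP : P.PassesThrough u) {A : Linkage G₁.spanningCoe k s u}
    {B : Linkage G₂.spanningCoe k u t}
    (hPAB : ∀ i, P.path i = ((A.path i).mapLe G₁.spanningCoe_le).append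
      ((B.path i).mapLe G₂.spanningCoe_le)) :
    ∃ (A' : Linkage G₁.spanningCoe k s u) (B' : Linkage G₂.spanningCoe k u t),
      (∀ i, Q.path i = ((A'.path i).mapLe G₁.spanningCoe_le).append
        ((B'.path i).mapLe G₂.spanningCoe_le)) ∧ A.Reconfigurable A' ∧ B.Reconfigurable B' := by
  induction hPQ with
  | refl => exact ⟨A, B, hPAB, .refl, .refl⟩
  | tail hPR hRR' ih =>
    obtain ⟨A', B', hR, hA, hB⟩ := ih
    have hR' := (hP.of_reconfigurable hunion hsep hs (fun i => (ht i).2) hPR).of_adjacent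
      hunion hsep hs (fun i => (ht i).2) hRR'
    obtain ⟨A'', B'', hR''⟩ := hR'.exists_split hunion hsep hs (fun i => (ht i).1)
    obtain ⟨hA', hB'⟩ := hRR'.reflGen_of_path_eq_append hR hR''
    exact ⟨A'', B'', hR'', hA.trans hA'.to_reflTransGen, hB.trans hB'.to_reflTransGen⟩

theorem reconfigurable_of_split (hsep : G₁.verts ∩ G₂.verts = Set.range u)
    (hs : ∀ i, s i ∈ G₁.verts) {P Q : Linkage G k s t} {A A' : Linkage G₁.spanningCoe k s u}
    {B B' : Linkage G₂.spanningCoe k u t}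
    (hP : ∀ i, P.path i = ((A.path i).mapLe G₁.spanningCoe_le).append
      ((B.path i).mapLe G₂.spanningCoe_le))
    (hQ : ∀ i, Q.path i = ((A'.path i).mapLe G₁.spanningCoe_le).append
      ((B'.path i).mapLe G₂.spanningCoe_le))
    (hA : A.Reconfigurable A') (hB : B.Reconfigurable B') : P.Reconfigurable Q := by
  have hc := composable_of_inter_verts_eq_range (t := t) hsep hs
  let glue (X : Linkage G₁.spanningCoe k s u) (Y : Linkage G₂.spanningCoe k u t) :
      Linkage G k s t := X.append Y G₁.spanningCoe_le G₂.spanningCoe_le (hc X Y)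
  obtain rfl : P = glue A B := ext hP
  obtain rfl : Q = glue A' B' := ext hQ
  refine Relation.ReflTransGen.trans (b := glue A' B) ?_ ?_
  · exact hA.map (glue · B) fun X Y ⟨i, _, h⟩ =>
      ⟨i, fun j hj => by simp only [glue, append_path, h j hj]⟩
  · exact hB.map (glue A' ·) fun X Y ⟨i, _, h⟩ =>
      ⟨i, fun j hj => by simp only [glue, append_path, h j hj]⟩

end Separator

end Linkage

theorem reconfigurable_iff_split_along_separator_general
    {V : Type} [Fintype V] [DecidableEq V] {G : SimpleGraph V} {k : ℕ}
    (s t : Fin k → V)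
    (G₁ G₂ : G.Subgraph) (hunion : G₁ ⊔ G₂ = ⊤)
    (U : Finset V) (hU : G₁.verts ∩ G₂.verts = ↑U) (hcard : U.card = k)
    (hsG₁ : ∀ i : Fin k, s i ∈ G₁.verts \ ↑U)
    (htG₂ : ∀ i : Fin k, t i ∈ G₂.verts \ ↑U)
    (u : Fin k → V) (hu : ∀ i, u i ∈ U)
    (P Q : Linkage G k s t)
    (hPu : ∀ (i : Fin k) (x : V), x ∈ U → (x ∈ (P.path i).support ↔ x = u i))
    (hQu : ∀ (i : Fin k) (x : V), x ∈ U → (x ∈ (Q.path i).support ↔ x = u i)) :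
    (∀ i : Fin k, ∃ (W₁ : G₁.spanningCoe.Walk (s i) (u i))
        (W₂ : G₂.spanningCoe.Walk (u i) (t i)),
      P.path i = (W₁.mapLe G₁.spanningCoe_le).append (W₂.mapLe G₂.spanningCoe_le)) ∧
    (∀ i : Fin k, ∃ (W₁ : G₁.spanningCoe.Walk (s i) (u i))
        (W₂ : G₂.spanningCoe.Walk (u i) (t i)),
      Q.path i = (W₁.mapLe G₁.spanningCoe_le).append (W₂.mapLe G₂.spanningCoe_le)) ∧
    (P.Reconfigurable Q ↔
      ∃ (P₁ Q₁ : Linkage G₁.spanningCoe k s u) (P₂ Q₂ : Linkage G₂.spanningCoe k u t),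
        (∀ i : Fin k, P.path i =
          ((P₁.path i).mapLe G₁.spanningCoe_le).append ((P₂.path i).mapLe G₂.spanningCoe_le)) ∧
        (∀ i : Fin k, Q.path i =
          ((Q₁.path i).mapLe G₁.spanningCoe_le).append ((Q₂.path i).mapLe G₂.spanningCoe_le)) ∧
        P₁.Reconfigurable Q₁ ∧ P₂.Reconfigurable Q₂) := by
  have hs : ∀ i, s i ∈ G₁.verts := fun i => (hsG₁ i).1
  have ht : ∀ i, t i ∈ G₂.verts \ G₁.verts := fun i =>
    ⟨(htG₂ i).1, fun ht₁ => (htG₂ i).2 (hU ▸ ⟨ht₁, (htG₂ i).1⟩)⟩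
  have hPmem : ∀ i, u i ∈ (P.path i).support := fun i => by
    obtain ⟨x, hx, hxU⟩ :=
      SimpleGraph.Subgraph.exists_mem_support_inter_verts hunion (P.path i) (hs i) (ht i).2
    exact (hPu i x (hU.le hxU)).1 hx ▸ hx
  have hinj : u.Injective := fun i j hij => P.eq_of_mem_support (hPmem i) (hij ▸ hPmem j)
  have hsep : G₁.verts ∩ G₂.verts = Set.range u := by
    have himage : Finset.univ.image u = U := Finset.eq_of_subset_of_card_le
      (by simpa [Finset.subset_iff] using hu)
      (by rw [hcard, Finset.card_image_of_injective _ hinj, Finset.card_univ, Fintype.card_fin])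
    rw [hU, ← himage, Finset.coe_image, Finset.coe_univ, Set.image_univ]
  have hthrough : ∀ R : Linkage G k s t,
      (∀ i x, x ∈ U → (x ∈ (R.path i).support ↔ x = u i)) → R.PassesThrough u :=
    fun R hR i j => (hR i (u j) (hu j)).trans (hinj.eq_iff.trans eq_comm)
  obtain ⟨P₁, P₂, hP⟩ := (hthrough P hPu).exists_split hunion hsep hs fun i => (ht i).1
  obtain ⟨Q₁, Q₂, hQ⟩ := (hthrough Q hQu).exists_split hunion hsep hs fun i => (ht i).1
  refine ⟨fun i => ⟨_, _, hP i⟩, fun i => ⟨_, _, hQ i⟩, fun hPQ => ?_, ?_⟩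
  · obtain ⟨Q₁', Q₂', hQ', h₁, h₂⟩ := hPQ.exists_split hunion hsep hs ht (hthrough P hPu) hP
    exact ⟨P₁, Q₁', P₂, Q₂', hP, hQ', h₁, h₂⟩
  · rintro ⟨P₁', Q₁', P₂', Q₂', hP', hQ', h₁, h₂⟩
    exact Linkage.reconfigurable_of_split hsep hs hP' hQ' h₁ h₂

/-- Splitting a Disjoint Paths Reconfiguration instance along a terminal separator U of
size k: if G = G₁ ∪ G₂ with V(G₁) ∩ V(G₂) = U, sources in G₁ ∖ U, sinks in G₂ ∖ U, and
both linkages meet U in the same vertex u i on the i-th path, then each linkage path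
decomposes as a path in G₁ followed by a path in G₂, and P is reconfigurable to Q in G
iff the first parts are reconfigurable in G₁ and the second parts in G₂. -/
theorem reconfigurable_iff_split_along_separator
    {V : Type} [Fintype V] [DecidableEq V] {G : SimpleGraph V} {k : ℕ}
    (s t : Fin k → V)
    (hdist : Function.Injective (Sum.elim s t : Fin k ⊕ Fin k → V))
    (G₁ G₂ : G.Subgraph) (hunion : G₁ ⊔ G₂ = ⊤)
    (U : Finset V) (hU : G₁.verts ∩ G₂.verts = ↑U) (hcard : U.card = k)
    (hUterm : ∀ i : Fin k, s i ∉ U ∧ t i ∉ U)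
    (hsG₁ : ∀ i : Fin k, s i ∈ G₁.verts \ ↑U)
    (htG₂ : ∀ i : Fin k, t i ∈ G₂.verts \ ↑U)
    (u : Fin k → V) (hu : ∀ i, u i ∈ U)
    (P Q : Linkage G k s t)
    (hPu : ∀ (i : Fin k) (x : V), x ∈ U → (x ∈ (P.path i).support ↔ x = u i))
    (hQu : ∀ (i : Fin k) (x : V), x ∈ U → (x ∈ (Q.path i).support ↔ x = u i)) :
    (∀ i : Fin k, ∃ (W₁ : G₁.spanningCoe.Walk (s i) (u i))
        (W₂ : G₂.spanningCoe.Walk (u i) (t i)),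
      P.path i = (W₁.mapLe G₁.spanningCoe_le).append (W₂.mapLe G₂.spanningCoe_le)) ∧
    (∀ i : Fin k, ∃ (W₁ : G₁.spanningCoe.Walk (s i) (u i))
        (W₂ : G₂.spanningCoe.Walk (u i) (t i)),
      Q.path i = (W₁.mapLe G₁.spanningCoe_le).append (W₂.mapLe G₂.spanningCoe_le)) ∧
    (P.Reconfigurable Q ↔
      ∃ (P₁ Q₁ : Linkage G₁.spanningCoe k s u) (P₂ Q₂ : Linkage G₂.spanningCoe k u t),
        (∀ i : Fin k, P.path i =
          ((P₁.path i).mapLe G₁.spanningCoe_le).append ((P₂.path i).mapLe G₂.spanningCoe_le)) ∧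
        (∀ i : Fin k, Q.path i =
          ((Q₁.path i).mapLe G₁.spanningCoe_le).append ((Q₂.path i).mapLe G₂.spanningCoe_le)) ∧
        P₁.Reconfigurable Q₁ ∧ P₂.Reconfigurable Q₂) :=
  reconfigurable_iff_split_along_separator_general s t G₁ G₂ hunion U hU hcard hsG₁ htG₂ u hu P Q
    hPu hQu
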